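/- Let L be a frame, X a poset, and h ∈ ((X → L)* → L)* (i.e. a monotone map from (X → L)* to L, with (X → L)* ordered by reversed pointwise order, satisfying the minimum condition). Then for every join-irreducible ℓ ∈ L and x ∈ X: ℓ ≤ ⨆_{b ∈ (X → L)*} (h(b) ⊓ b(x)) if and only if ℓ ≤ τ(h)(ℓ)(x), where τ(h)(ℓ) = min {b ∈ (X → L)* | ℓ ≤ h(b)}. -/

import Mathlib

/-- An element of a complete lattice is completely join-irreducible if
`ℓ = ⨆ S` implies `ℓ ∈ S`. -/
def CJIrr {L : Type*} [CompleteLattice L] (ℓ : L) : Prop :=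
  ∀ S : Set L, ℓ = sSup S → ℓ ∈ S

/-- Membership in `(X → L)*`: `b` is monotone and for each completely
join-irreducible `ℓ`, the set `{x | ℓ ≤ b x}` has a minimum. -/
def StarPred {X L : Type*} [PartialOrder X] [Order.Frame L] (b : X → L) : Prop :=
  Monotone b ∧ ∀ ℓ : L, CJIrr ℓ → ∃ m, IsLeast {x : X | ℓ ≤ b x} m

/-- In a frame, `ℓ ≤ ⨆ S` gives `ℓ = ⨆ {ℓ ⊓ s | s ∈ S}` by distributivity, so a completely
join-irreducible `ℓ` equals some `ℓ ⊓ s`. -/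
theorem CJIrr.exists_le_of_le_sSup {L : Type*} [Order.Frame L] {ℓ : L} (hℓ : CJIrr ℓ)
    {S : Set L} (hS : ℓ ≤ sSup S) : ∃ s ∈ S, ℓ ≤ s := by
  have hℓS : ℓ = sSup ((ℓ ⊓ ·) '' S) := by
    rw [sSup_image, ← inf_sSup_eq, inf_eq_left.mpr hS]
  obtain ⟨s, hs, hℓs⟩ := hℓ _ hℓS
  exact ⟨s, hs, inf_eq_left.mp hℓs⟩

theorem stmt8_general {X L : Type*} [PartialOrder X] [Order.Frame L]
    (h : (X → L) → L)
    (τh : L → (X → L))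
    (hτh : ∀ ℓ : L, CJIrr ℓ →
      StarPred (τh ℓ) ∧ ℓ ≤ h (τh ℓ) ∧
      ∀ c : X → L, StarPred c → ℓ ≤ h c → ∀ x : X, c x ≤ τh ℓ x) :
    ∀ (ℓ : L) (x : X), CJIrr ℓ →
      (ℓ ≤ sSup {v : L | ∃ b : X → L, StarPred b ∧ v = h b ⊓ b x} ↔
        ℓ ≤ τh ℓ x) := by
  intro ℓ x hℓ
  obtain ⟨hτ_star, hτ_le, hτ_min⟩ := hτh ℓ hℓ
  constructor
  · intro hsup
    obtain ⟨_, ⟨b, hb, rfl⟩, hℓb⟩ := hℓ.exists_le_of_le_sSup hsup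
    obtain ⟨hℓ_hb, hℓ_bx⟩ := le_inf_iff.mp hℓb
    exact hℓ_bx.trans (hτ_min b hb hℓ_hb x)
  · intro hx
    exact (le_inf hτ_le hx).trans (le_sSup ⟨τh ℓ, hτ_star, rfl⟩)

/-- For `h ∈ ((X → L)* → L)*` (monotone w.r.t. the reversed pointwise order on
`(X → L)*`, with minima `τh ℓ = min {b | ℓ ≤ h b}` existing), one has
`ℓ ≤ ⨆_{b ∈ (X→L)*} (h b ⊓ b x) ↔ ℓ ≤ τh ℓ x` for join-irreducible `ℓ`. -/
theorem stmt8 {X L : Type*} [PartialOrder X] [Order.Frame L]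
    (h : (X → L) → L)
    (hmono : ∀ b c : X → L, StarPred b → StarPred c →
      (∀ x : X, c x ≤ b x) → h b ≤ h c)
    (τh : L → (X → L))
    (hτh : ∀ ℓ : L, CJIrr ℓ →
      StarPred (τh ℓ) ∧ ℓ ≤ h (τh ℓ) ∧
      ∀ c : X → L, StarPred c → ℓ ≤ h c → ∀ x : X, c x ≤ τh ℓ x) :
    ∀ (ℓ : L) (x : X), CJIrr ℓ →
      (ℓ ≤ sSup {v : L | ∃ b : X → L, StarPred b ∧ v = h b ⊓ b x} ↔
        ℓ ≤ τh ℓ x) :=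
  stmt8_general h τh hτh
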